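/- Let P be a scale group acting on T_{q+1} and let c be a P-labelling. For each vertex v set P|_v = {φ^c_{x(v)} ∘ x ∘ (φ^c_v)^{−1} : x ∈ P} ⊆ Isom(T_{q,q}). Then P|_v is the same set for every vertex v, and it is a closed, self-replicating subgroup of Isom(T_{q,q}). -/

import Mathlib

namespace Scale

/-- A vertex of the `(q+1)`-regular tree `T_{q+1}`: a level `n ∈ ℤ` together with a
labelling `ℤ → Fin q` which vanishes above the level and for all sufficiently small indices. -/
@[ext] structure Vertex (q : ℕ) where
  level : ℤ
  lab : ℤ → Fin q
  zero_gt : ∀ i : ℤ, level < i → (lab i : ℕ) = 0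
  bdd : ∃ N : ℤ, ∀ i : ℤ, i < N → (lab i : ℕ) = 0

namespace Vertex

variable {q : ℕ} [NeZero q]

/-- The parent `v⁺` of a vertex. -/
def parent (v : Vertex q) : Vertex q where
  level := v.level - 1
  lab := fun i => if v.level - 1 < i then 0 else v.lab i
  zero_gt := by intro i hi; simp [hi]
  bdd := by
    obtain ⟨N, hN⟩ := v.bdd
    refine ⟨N, fun i hi => ?_⟩
    by_cases h : v.level - 1 < i
    · simp [h]
    · simp [h, hN i hi]

/-- The child `vj` of a vertex `v`. -/
def child (v : Vertex q) (j : Fin q) : Vertex q where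
  level := v.level + 1
  lab := fun i => if i = v.level + 1 then j else v.lab i
  zero_gt := by
    intro i hi
    have h1 : i ≠ v.level + 1 := by omega
    simp [h1, v.zero_gt i (by omega)]
  bdd := by
    obtain ⟨N, hN⟩ := v.bdd
    refine ⟨min N (v.level + 1), fun i hi => ?_⟩
    have h1 : i < N := lt_of_lt_of_le hi (min_le_left _ _)
    have h2 : i < v.level + 1 := lt_of_lt_of_le hi (min_le_right _ _)
    have h3 : i ≠ v.level + 1 := by omega
    simp [h3, hN i h1]

/-- The restriction `w|_m` of a vertex to level `m`. -/
def trunc (v : Vertex q) (m : ℤ) : Vertex q where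
  level := m
  lab := fun i => if m < i then 0 else v.lab i
  zero_gt := by intro i hi; simp [hi]
  bdd := by
    obtain ⟨N, hN⟩ := v.bdd
    refine ⟨N, fun i hi => ?_⟩
    by_cases h : m < i
    · simp [h]
    · simp [h, hN i hi]

/-- `w` is a descendant of `u` (in the rooted subtree `T_u`). -/
def Descendant (u w : Vertex q) : Prop := u.level ≤ w.level ∧ trunc w u.level = u

end Vertex

/-- The all-zero vertex `ṽ_n` at level `n`. -/
def zeroVtx (q : ℕ) [NeZero q] (n : ℤ) : Vertex q where
  level := n
  lab := fun _ => 0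
  zero_gt := by intro i _; simp
  bdd := ⟨0, by intro i _; simp⟩

/-- The map shifting all labels by `k` (a translation towards the end `ω` when `k > 0`). -/
def shiftMap {q : ℕ} (k : ℤ) (v : Vertex q) : Vertex q where
  level := v.level + k
  lab := fun i => v.lab (i - k)
  zero_gt := fun i hi => v.zero_gt (i - k) (by omega)
  bdd := by
    obtain ⟨N, hN⟩ := v.bdd
    exact ⟨N + k, fun i hi => hN (i - k) (by omega)⟩

/-- The translation `x̃₀ᵏ` of `T_{q+1}` as a permutation of the vertices. -/
def shiftPerm (q : ℕ) (k : ℤ) : Equiv.Perm (Vertex q) where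
  toFun := shiftMap k
  invFun := shiftMap (-k)
  left_inv := by
    intro v
    refine Vertex.ext ?_ ?_
    · show v.level + k + -k = v.level
      omega
    · funext i
      show v.lab (i - -k - k) = v.lab i
      congr 1
      omega
  right_inv := by
    intro v
    refine Vertex.ext ?_ ?_
    · show v.level + -k + k = v.level
      omega
    · funext i
      show v.lab (i - k - -k) = v.lab i
      congr 1
      omega

/-- The group `Isom(T_{q+1})_ω` of tree automorphisms fixing the distinguished end `ω`,
realised as the subgroup of permutations of the vertex set commuting with `parent`. -/
def IsomOmega (q : ℕ) [NeZero q] : Subgroup (Equiv.Perm (Vertex q)) where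
  carrier := {x | ∀ v : Vertex q, x (Vertex.parent v) = Vertex.parent (x v)}
  one_mem' := fun _ => rfl
  mul_mem' := by
    intro a b ha hb v
    show (a * b) (Vertex.parent v) = Vertex.parent ((a * b) v)
    rw [Equiv.Perm.mul_apply, Equiv.Perm.mul_apply, hb, ha]
  inv_mem' := by
    intro a ha v
    show a⁻¹ (Vertex.parent v) = Vertex.parent (a⁻¹ v)
    have h := ha (a⁻¹ v)
    rw [show ∀ x, a (a⁻¹ x) = x from a.apply_symm_apply] at h
    rw [← h, show ∀ x, a⁻¹ (a x) = x from a.symm_apply_apply]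

/-- The level shift `n(x)` of an automorphism (evaluated at the zero vertex; for members
of `IsomOmega q` the shift is the same at every vertex). -/
def lshift {q : ℕ} [NeZero q] (x : Equiv.Perm (Vertex q)) : ℤ := (x (zeroVtx q 0)).level

/-- An automorphism is elliptic if it fixes a vertex. -/
def Elliptic {q : ℕ} (x : Equiv.Perm (Vertex q)) : Prop := ∃ v : Vertex q, x v = v

/-- Topology of pointwise convergence on `X → X` for `X` discrete. -/
def funTop (X : Type*) : TopologicalSpace (X → X) :=
  @Pi.topologicalSpace X (fun _ => X) (fun _ => ⊥)

/-- The permutation topology on `Equiv.Perm X`: pointwise stabilisers of finite sets of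
points form a neighbourhood basis of the identity. -/
def permTop (X : Type*) : TopologicalSpace (Equiv.Perm X) :=
  @TopologicalSpace.induced (Equiv.Perm X) ((X → X) × (X → X))
    (fun g => ((g : X → X), ((g⁻¹ : Equiv.Perm X) : X → X)))
    (@instTopologicalSpaceProd _ _ (funTop X) (funTop X))

instance (q : ℕ) : TopologicalSpace (Equiv.Perm (Vertex q)) := permTop _

instance (q : ℕ) : TopologicalSpace (Equiv.Perm (List (Fin q))) := permTop _

/-- A scale group: a closed subgroup of `Isom(T_{q+1})_ω` acting transitively on vertices. -/
def IsScaleGroup {q : ℕ} [NeZero q] (P : Subgroup (Equiv.Perm (Vertex q))) : Prop :=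
  P ≤ IsomOmega q ∧ IsClosed (P : Set (Equiv.Perm (Vertex q))) ∧
    ∀ v w : Vertex q, ∃ x ∈ P, x v = w

/-- The stabiliser of the vertex `v` in `P`, as a subgroup of the ambient permutation group. -/
def stabIn {q : ℕ} (P : Subgroup (Equiv.Perm (Vertex q))) (v : Vertex q) :
    Subgroup (Equiv.Perm (Vertex q)) where
  carrier := {g | g ∈ P ∧ g v = v}
  one_mem' := ⟨P.one_mem, rfl⟩
  mul_mem' := by
    intro a b ha hb
    exact ⟨P.mul_mem ha.1 hb.1, by rw [Equiv.Perm.mul_apply, hb.2, ha.2]⟩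
  inv_mem' := by
    intro a ha
    refine ⟨P.inv_mem ha.1, ?_⟩
    rw [Equiv.Perm.inv_eq_iff_eq]
    exact ha.2.symm

/-- The conjugate subgroup `xVx⁻¹`. -/
def conjSub {G : Type*} [Group G] (x : G) (V : Subgroup G) : Subgroup G :=
  V.map (MulAut.conj x).toMonoidHom

/-- The vertex `ξ|_m` on the ray towards the end represented by `ξ`. -/
def ray (q : ℕ) [NeZero q] (ξ : ℤ → Fin q) (N : ℤ) (hξ : ∀ i : ℤ, i < N → (ξ i : ℕ) = 0)
    (m : ℤ) : Vertex q where
  level := m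
  lab := fun i => if m < i then 0 else ξ i
  zero_gt := by intro i hi; simp [hi]
  bdd := by
    refine ⟨N, fun i hi => ?_⟩
    by_cases h : m < i
    · simp [h]
    · simp [h, hξ i hi]

/-- The contraction group of `x` in `P`. -/
def conSet {q : ℕ} (P : Subgroup (Equiv.Perm (Vertex q))) (x : Equiv.Perm (Vertex q)) :
    Set (Equiv.Perm (Vertex q)) :=
  {g | g ∈ P ∧ ∀ v : Vertex q, ∃ N : ℕ, ∀ n : ℕ, N ≤ n → (x ^ n * g * (x ^ n)⁻¹) v = v}


/-- `c` is a `P`-labelling of `T_{q+1}` with distinguished bi-infinite path `vp`: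
each `c v` is a bijection from the directed edges out of `v` (encoded as the
neighbours of `v`) to `{0, …, q}`; the edge towards the parent is labelled `q`;
along the path `vp` the downward edges are labelled `0`; and `P` contains, for
all `u₁, u₂`, an element carrying `u₁` to `u₂` and preserving the labels on the
rooted subtree of descendants of `u₁`. -/
def IsPLabelling {q : ℕ} [NeZero q] (P : Subgroup (Equiv.Perm (Vertex q)))
    (c : Vertex q → Vertex q → Fin (q + 1)) (vp : ℤ → Vertex q) : Prop :=
  (∀ v : Vertex q, ∀ j : Fin (q + 1),
      ∃! w : Vertex q, (Vertex.parent w = v ∨ w = Vertex.parent v) ∧ c v w = j) ∧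
  (∀ v : Vertex q, (c v (Vertex.parent v) : ℕ) = q) ∧
  (∀ n : ℤ, Vertex.parent (vp (n + 1)) = vp n) ∧
  (∀ n : ℤ, (c (vp n) (vp (n + 1)) : ℕ) = 0) ∧
  (∀ u₁ u₂ : Vertex q, ∃ x, x ∈ P ∧ x u₁ = u₂ ∧
    ∀ w w' : Vertex q, Vertex.Descendant u₁ w → Vertex.Descendant u₁ w' →
      (Vertex.parent w = w' ∨ Vertex.parent w' = w) → c (x w) (x w') = c w w')

open Classical in
/-- The standard labelling of `T_{q+1}`: the edge from `v` to its child `vj` is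
labelled `j` and the edge towards the parent is labelled `q`. -/
noncomputable def stdLabel (q : ℕ) [NeZero q] : Vertex q → Vertex q → Fin (q + 1) :=
  fun v w =>
    if Vertex.parent w = v then Fin.castLE (Nat.le_succ q) (w.lab (v.level + 1))
    else Fin.last q

/-- Convert an edge label in `{0,…,q}` known to be `< q` into a letter in `{0,…,q-1}`. -/
def toFinQ {q : ℕ} [NeZero q] (j : Fin (q + 1)) : Fin q :=
  if h : (j : ℕ) < q then ⟨j, h⟩ else ⟨0, Nat.pos_of_ne_zero (NeZero.ne q)⟩

/-- The string of labels read along the downward path of length `d` ending at `w`. -/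
def labelString {q : ℕ} [NeZero q] (c : Vertex q → Vertex q → Fin (q + 1)) :
    Vertex q → ℕ → List (Fin q)
  | _, 0 => []
  | w, (d + 1) => labelString c (Vertex.parent w) d ++ [toFinQ (c (Vertex.parent w) w)]

/-- The isomorphism `φ^c_v : T_v → T_{q,q}` given by a labelling `c`: a descendant `w`
of `v` is sent to the string of labels along the path from `v` down to `w`. -/
def phiStr {q : ℕ} [NeZero q] (c : Vertex q → Vertex q → Fin (q + 1)) (v w : Vertex q) :
    List (Fin q) :=
  labelString c w ((w.level - v.level).toNat)

/-- The set `P|_v = {φ^c_{x(v)} ∘ x ∘ (φ^c_v)⁻¹ : x ∈ P}` of sections of elements of `P`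
at the vertex `v`, with respect to the labelling `c`. -/
def sectSet {q : ℕ} [NeZero q] (P : Subgroup (Equiv.Perm (Vertex q)))
    (c : Vertex q → Vertex q → Fin (q + 1)) (v : Vertex q) :
    Set (Equiv.Perm (List (Fin q))) :=
  {g | ∃ x, x ∈ P ∧ ∀ w : Vertex q, Vertex.Descendant v w →
        g (phiStr c v w) = phiStr c (x v) (x w)}

/-- The standard isomorphism `φ_v : T_v → T_{q,q}`: a descendant `w` of `v` of level `m`
is sent to the string `(w_{n+1}, …, w_m)` where `n` is the level of `v`. -/
def stdStr {q : ℕ} (v w : Vertex q) : List (Fin q) :=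
  (List.range (w.level - v.level).toNat).map fun k => w.lab (v.level + 1 + k)

/-- The set `{φ_{x(v)} ∘ x ∘ φ_v⁻¹ : x ∈ P}` with respect to the standard isomorphisms. -/
def stdSect {q : ℕ} [NeZero q] (P : Subgroup (Equiv.Perm (Vertex q))) (v : Vertex q) :
    Set (Equiv.Perm (List (Fin q))) :=
  {g | ∃ x, x ∈ P ∧ ∀ w : Vertex q, Vertex.Descendant v w →
        g (stdStr v w) = stdStr (x v) (x w)}

/-- `Isom(T_{q,q})`: the group of permutations of the set of finite strings over
`{0,…,q-1}` preserving length and the prefix relation. -/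
def RIsom (q : ℕ) : Subgroup (Equiv.Perm (List (Fin q))) where
  carrier := {g | (∀ l : List (Fin q), (g l).length = l.length) ∧
    ∀ l₁ l₂ : List (Fin q), l₁ <+: l₂ → g l₁ <+: g l₂}
  one_mem' := ⟨fun _ => rfl, fun _ _ h => h⟩
  mul_mem' := by
    intro a b ha hb
    constructor
    · intro l
      rw [Equiv.Perm.mul_apply, ha.1, hb.1]
    · intro l₁ l₂ h
      rw [Equiv.Perm.mul_apply, Equiv.Perm.mul_apply]
      exact ha.2 _ _ (hb.2 _ _ h)
  inv_mem' := by
    intro a ha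
    have hlen : ∀ l : List (Fin q), (a⁻¹ l).length = l.length := by
      intro l
      have h := ha.1 (a⁻¹ l)
      rw [show ∀ x, a (a⁻¹ x) = x from a.apply_symm_apply] at h
      exact h.symm
    refine ⟨hlen, ?_⟩
    intro l₁ l₂ h
    have htake : List.take (a⁻¹ l₁).length (a⁻¹ l₂) <+: a⁻¹ l₂ := List.take_prefix _ _
    have h2 : a (List.take (a⁻¹ l₁).length (a⁻¹ l₂)) <+: a (a⁻¹ l₂) := ha.2 _ _ htake
    rw [show ∀ x, a (a⁻¹ x) = x from a.apply_symm_apply] at h2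
    have hle : l₁.length ≤ l₂.length := h.length_le
    have hlen3 : (a (List.take (a⁻¹ l₁).length (a⁻¹ l₂))).length = l₁.length := by
      rw [ha.1, List.length_take, hlen, hlen]
      omega
    have hpre : a (List.take (a⁻¹ l₁).length (a⁻¹ l₂)) <+: l₁ :=
      List.prefix_of_prefix_length_le h2 h (le_of_eq hlen3)
    have heq : a (List.take (a⁻¹ l₁).length (a⁻¹ l₂)) = l₁ := hpre.eq_of_length hlen3
    have heq2 : List.take (a⁻¹ l₁).length (a⁻¹ l₂) = a⁻¹ l₁ := by
      apply a.injective
      rw [heq, show ∀ x, a (a⁻¹ x) = x from a.apply_symm_apply]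
    rw [← heq2]
    exact List.take_prefix _ _

/-- A subgroup of `Isom(T_{q,q})` is self-replicating if it is self-similar, transitive
on level 1, and all the section homomorphisms `g ↦ g|_w` are surjective. -/
def SelfReplicating {q : ℕ} (G : Subgroup (Equiv.Perm (List (Fin q)))) : Prop :=
  (∀ w : List (Fin q), ∀ g, g ∈ G → g w = w →
      ∃ g', g' ∈ G ∧ ∀ v : List (Fin q), g (w ++ v) = w ++ g' v) ∧
  (∀ j j' : Fin q, ∃ g ∈ G, g [j] = [j']) ∧
  (∀ w : List (Fin q), ∀ g', g' ∈ G →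
      ∃ g, g ∈ G ∧ g w = w ∧ ∀ v : List (Fin q), g (w ++ v) = w ++ g' v)

/-- The stabiliser of the string `w` in `G ≤ Isom(T_{q,q})`, as a subgroup of `G`. -/
def rstab {q : ℕ} (G : Subgroup (Equiv.Perm (List (Fin q)))) (w : List (Fin q)) :
    Subgroup G where
  carrier := {g | (g : Equiv.Perm (List (Fin q))) w = w}
  one_mem' := rfl
  mul_mem' := by
    intro a b ha hb
    show ((a * b : G) : Equiv.Perm (List (Fin q))) w = w
    rw [Subgroup.coe_mul, Equiv.Perm.mul_apply]
    rw [show (b : Equiv.Perm (List (Fin q))) w = w from hb,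
      show (a : Equiv.Perm (List (Fin q))) w = w from ha]
  inv_mem' := by
    intro a ha
    show ((a⁻¹ : G) : Equiv.Perm (List (Fin q))) w = w
    rw [Subgroup.coe_inv, Equiv.Perm.inv_eq_iff_eq]
    exact (show (a : Equiv.Perm (List (Fin q))) w = w from ha).symm


end Scale

/-!
The labelling `c` identifies each subtree `T_v` with `T_{q,q}` through `φ^c_v`, and an
element of `P` preserving the labels below `u` intertwines `φ^c_u` with `φ^c_{x(u)}`, so its
section at `u` is trivial. Sections satisfy the cocycle rule
`(x y)|_v = x|_{y(v)} ∘ y|_v`; composing with label-preserving elements therefore moves the base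
point freely, which shows that `P|_v` does not depend on `v` and equals the image of the
stabiliser of `v` under the homomorphism `x ↦ x|_v`. The section of `x|_v` at a string `w` is
`x|_u` for the vertex `u` below `v` with label string `w`, which gives self-similarity and
surjectivity of sections; transitivity on level one comes from the label-preserving elements
carrying one child of `v` to another. For closedness, an element of the closure of `P|_v` is
approximated at ever deeper levels by sections of elements of `P` fixing `v`; these have
finite orbits on vertices, so they converge along an ultrafilter, and the limit lies in `P`
because `P` is closed.
-/

namespace Scale

namespace Vertex

variable {q : ℕ} [NeZero q] {u v w : Vertex q}

lemma lab_eq_zero_of_level_lt {i : ℤ} (h : v.level < i) : v.lab i = 0 :=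
  Fin.ext (by simpa using v.zero_gt i h)

lemma level_trunc (v : Vertex q) (m : ℤ) : (v.trunc m).level = m := rfl

lemma level_parent (v : Vertex q) : v.parent.level = v.level - 1 := rfl

lemma parent_eq_trunc (v : Vertex q) : v.parent = v.trunc (v.level - 1) := rfl

lemma trunc_level_self (v : Vertex q) : v.trunc v.level = v := by
  refine Vertex.ext rfl (funext fun i => ?_)
  show (if v.level < i then 0 else v.lab i) = v.lab i
  split_ifs with h
  · exact (lab_eq_zero_of_level_lt h).symm
  · rfl

lemma trunc_trunc (v : Vertex q) {m m' : ℤ} (h : m' ≤ m) :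
    (v.trunc m).trunc m' = v.trunc m' := by
  refine Vertex.ext rfl (funext fun i => ?_)
  show (if m' < i then 0 else if m < i then 0 else v.lab i) = if m' < i then 0 else v.lab i
  split_ifs <;> first | rfl | omega

lemma iterate_parent_eq_trunc (k : ℕ) (v : Vertex q) :
    parent^[k] v = v.trunc (v.level - k) := by
  induction k with
  | zero => simpa using (trunc_level_self v).symm
  | succ k ih =>
    rw [Function.iterate_succ_apply', ih, parent_eq_trunc, level_trunc, trunc_trunc v (by omega),
      Nat.cast_succ, sub_add_eq_sub_sub]

lemma level_iterate_parent (k : ℕ) (v : Vertex q) : (parent^[k] v).level = v.level - k := by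
  rw [iterate_parent_eq_trunc, level_trunc]

lemma Descendant.refl (v : Vertex q) : Descendant v v := ⟨le_rfl, trunc_level_self v⟩

lemma Descendant.trans (h₁ : Descendant u v) (h₂ : Descendant v w) : Descendant u w :=
  ⟨h₁.1.trans h₂.1, by rw [← trunc_trunc w h₁.1, h₂.2, h₁.2]⟩

lemma descendant_of_parent_eq (h : v.parent = u) : Descendant u v := by
  subst h
  exact ⟨by rw [level_parent]; omega, rfl⟩

lemma descendant_iterate_parent (k : ℕ) (v : Vertex q) : Descendant (parent^[k] v) v :=
  ⟨by rw [level_iterate_parent]; omega, by rw [level_iterate_parent, iterate_parent_eq_trunc]⟩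

lemma Descendant.iterate_parent_eq (h : Descendant u v) :
    parent^[(v.level - u.level).toNat] v = u := by
  have := h.1
  rw [iterate_parent_eq_trunc, show v.level - ((v.level - u.level).toNat : ℕ) = u.level by omega]
  exact h.2

lemma Descendant.eq_of_level_eq (h : Descendant u v) (hl : v.level = u.level) : v = u := by
  have h₂ := h.2
  rwa [← hl, trunc_level_self] at h₂

lemma Descendant.parent (h : Descendant u w) (hlt : u.level < w.level) :
    Descendant u w.parent :=
  ⟨by rw [level_parent]; omega, by rw [parent_eq_trunc, trunc_trunc w (by omega), h.2]⟩

lemma exists_descendant_descendant (v w : Vertex q) :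
    ∃ a, Descendant a v ∧ Descendant a w := by
  obtain ⟨N, hN⟩ := v.bdd
  obtain ⟨N', hN'⟩ := w.bdd
  set m := min (min N N') (min v.level w.level) - 1
  have hvw : w.trunc m = v.trunc m := by
    refine Vertex.ext rfl (funext fun i => ?_)
    show (if m < i then 0 else w.lab i) = if m < i then 0 else v.lab i
    split_ifs with h
    · rfl
    · exact Fin.ext ((hN' i (by omega)).trans (hN i (by omega)).symm)
  refine ⟨v.trunc m, ⟨?_, rfl⟩, ⟨?_, hvw⟩⟩ <;> rw [level_trunc] <;> omega

lemma finite_setOf_descendant_level (a : Vertex q) (L : ℤ) :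
    {w : Vertex q | Descendant a w ∧ w.level = L}.Finite := by
  have : Finite (Set.Icc (a.level + 1) L) := (Set.finite_Icc _ _).to_subtype
  refine Set.Finite.of_finite_image (f := fun w (i : Set.Icc (a.level + 1) L) => w.lab i)
    (Set.toFinite _) ?_
  rintro w₁ ⟨hw₁, hl₁⟩ w₂ ⟨hw₂, hl₂⟩ hlab
  refine Vertex.ext (hl₁.trans hl₂.symm) (funext fun i => ?_)
  by_cases hi : L < i
  · rw [lab_eq_zero_of_level_lt (by omega), lab_eq_zero_of_level_lt (by omega)]
  by_cases hia : i ≤ a.level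
  · have h₁ := congrArg (fun u => lab u i) hw₁.2
    have h₂ := congrArg (fun u => lab u i) hw₂.2
    simp only [trunc, not_lt.2 hia, if_false] at h₁ h₂
    rw [h₁, h₂]
  · exact congrFun hlab ⟨i, by omega, by omega⟩

end Vertex

open Vertex

section IsomOmega

variable {q : ℕ} [NeZero q] {x : Equiv.Perm (Vertex q)} {u v w : Vertex q}

lemma map_iterate_parent (hx : x ∈ IsomOmega q) (k : ℕ) (v : Vertex q) :
    x (parent^[k] v) = parent^[k] (x v) :=
  Function.Commute.iterate_right (f := ⇑x) hx k v

lemma level_sub_map_of_descendant (hx : x ∈ IsomOmega q) (h : Descendant u v) :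
    (x v).level - (x u).level = v.level - u.level := by
  have hu := congrArg level (map_iterate_parent hx (v.level - u.level).toNat v)
  rw [h.iterate_parent_eq, level_iterate_parent] at hu
  have := h.1
  omega

lemma Vertex.Descendant.map (hx : x ∈ IsomOmega q) (h : Descendant u v) :
    Descendant (x u) (x v) := by
  rw [← h.iterate_parent_eq, map_iterate_parent hx]
  exact descendant_iterate_parent _ _

lemma apply_eq_self_of_descendant (hx : x ∈ IsomOmega q) (h : Descendant u v) (hv : x v = v) :
    x u = u := by
  rw [← h.iterate_parent_eq, map_iterate_parent hx, hv]

lemma finite_range_apply_of_apply_eq_self {ι : Type*} {f : ι → Equiv.Perm (Vertex q)}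
    (hf : ∀ n, f n ∈ IsomOmega q) (hfv : ∀ n, f n v = v) (w : Vertex q) :
    (Set.range fun n => f n w).Finite := by
  obtain ⟨a, hav, haw⟩ := exists_descendant_descendant v w
  refine (finite_setOf_descendant_level a w.level).subset ?_
  rintro _ ⟨n, rfl⟩
  have hfa := apply_eq_self_of_descendant (hf n) hav (hfv n)
  refine ⟨hfa ▸ haw.map (hf n), ?_⟩
  have := level_sub_map_of_descendant (hf n) haw
  rw [hfa] at this
  exact (by omega : (f n w).level = w.level)

end IsomOmega

section LabelString

variable {q : ℕ} [NeZero q] (c : Vertex q → Vertex q → Fin (q + 1)) {u v w : Vertex q}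

lemma length_labelString (w : Vertex q) (d : ℕ) : (labelString c w d).length = d := by
  induction d generalizing w with
  | zero => rfl
  | succ d ih => simp [labelString, ih]

lemma labelString_add (w : Vertex q) (d₁ d₂ : ℕ) :
    labelString c w (d₁ + d₂) =
      labelString c (parent^[d₂] w) d₁ ++ labelString c w d₂ := by
  induction d₂ generalizing w with
  | zero => simp [labelString]
  | succ d₂ ih =>
    rw [← add_assoc, labelString, labelString, ih, Function.iterate_succ_apply,
      List.append_assoc]

lemma phiStr_self (v : Vertex q) : phiStr c v v = [] := by
  simp [phiStr, labelString]

lemma length_phiStr (v w : Vertex q) : (phiStr c v w).length = (w.level - v.level).toNat :=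
  length_labelString c w _

variable {c}

lemma phiStr_append (h₁ : Descendant v u) (h₂ : Descendant u w) :
    phiStr c v w = phiStr c v u ++ phiStr c u w := by
  have := h₁.1
  have := h₂.1
  rw [phiStr, show (w.level - v.level).toNat =
    (u.level - v.level).toNat + (w.level - u.level).toNat by omega, labelString_add,
    h₂.iterate_parent_eq]
  rfl

lemma phiStr_of_parent_eq (h : u.parent = v) : phiStr c v u = [toFinQ (c v u)] := by
  subst h
  simp [phiStr, labelString, show u.level - u.parent.level = 1 from sub_sub_cancel _ _]

/-- The condition on `x` in the last clause of `IsPLabelling`, with `u₁ = u`. -/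
def PreservesLabelsBelow (c : Vertex q → Vertex q → Fin (q + 1)) (x : Equiv.Perm (Vertex q))
    (u : Vertex q) : Prop :=
  ∀ w w' : Vertex q, Descendant u w → Descendant u w' →
    (w.parent = w' ∨ w'.parent = w) → c (x w) (x w') = c w w'

lemma labelString_map {x : Equiv.Perm (Vertex q)} (hx : x ∈ IsomOmega q)
    (hpres : PreservesLabelsBelow c x u) (d : ℕ) :
    ∀ w, Descendant u w → (d : ℤ) ≤ w.level - u.level →
      labelString c (x w) d = labelString c w d := by
  induction d with
  | zero => intro _ _ _; rfl
  | succ d ih =>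
    intro w hw hd
    have hlt : u.level < w.level := by omega
    rw [labelString, labelString, ← hx w, ih w.parent (hw.parent hlt)
      (by rw [level_parent]; omega), hpres _ _ (hw.parent hlt) hw (Or.inr rfl)]

lemma phiStr_map {x : Equiv.Perm (Vertex q)} (hx : x ∈ IsomOmega q)
    (hpres : PreservesLabelsBelow c x u) (h : Descendant u w) :
    phiStr c (x u) (x w) = phiStr c u w := by
  rw [phiStr, phiStr, level_sub_map_of_descendant hx h]
  exact labelString_map hx hpres _ w h (by have := h.1; omega)

end LabelString

section EdgeLabelling

variable {q : ℕ} [NeZero q]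

/-- The conditions of `IsPLabelling` that involve neither `P` nor the path `vp`. -/
def IsEdgeLabelling (c : Vertex q → Vertex q → Fin (q + 1)) : Prop :=
  (∀ v : Vertex q, ∀ j : Fin (q + 1),
      ∃! w : Vertex q, (Vertex.parent w = v ∨ w = Vertex.parent v) ∧ c v w = j) ∧
  ∀ v : Vertex q, (c v (Vertex.parent v) : ℕ) = q

lemma IsPLabelling.isEdgeLabelling {P : Subgroup (Equiv.Perm (Vertex q))}
    {c : Vertex q → Vertex q → Fin (q + 1)} {vp : ℤ → Vertex q} (hc : IsPLabelling P c vp) :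
    IsEdgeLabelling c :=
  ⟨hc.1, hc.2.1⟩

lemma toFinQ_castLE (j : Fin q) : toFinQ (Fin.castLE (Nat.le_succ q) j) = j := by
  simp [toFinQ]

namespace IsEdgeLabelling

variable {c : Vertex q → Vertex q → Fin (q + 1)} {u v w : Vertex q}

lemma eq_parent_of_label_eq (hc : IsEdgeLabelling c) (h : (c v w : ℕ) = q)
    (hw : w.parent = v ∨ w = v.parent) : w = v.parent := by
  obtain ⟨z, -, hz⟩ := hc.1 v (c v w)
  exact (hz w ⟨hw, rfl⟩).trans (hz v.parent ⟨Or.inr rfl, Fin.ext (by rw [hc.2 v, h])⟩).symm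

lemma label_lt_of_parent_eq (hc : IsEdgeLabelling c) (h : w.parent = v) : (c v w : ℕ) < q := by
  refine lt_of_le_of_ne (Nat.lt_succ_iff.1 (c v w).isLt) fun hq => ?_
  have hlev := congrArg level (hc.eq_parent_of_label_eq hq (Or.inl h))
  rw [← h, level_parent, level_parent] at hlev
  omega

variable (hc : IsEdgeLabelling c)

noncomputable def child (v : Vertex q) (j : Fin q) : Vertex q :=
  (hc.1 v (Fin.castLE (Nat.le_succ q) j)).exists.choose

lemma label_child (v : Vertex q) (j : Fin q) :
    c v (hc.child v j) = Fin.castLE (Nat.le_succ q) j :=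
  (hc.1 v _).exists.choose_spec.2

lemma parent_child (v : Vertex q) (j : Fin q) : (hc.child v j).parent = v := by
  have spec := (hc.1 v (Fin.castLE (Nat.le_succ q) j)).exists.choose_spec
  refine spec.1.resolve_right fun h => ?_
  have hq := congrArg Fin.val spec.2
  rw [h, hc.2 v, Fin.val_castLE] at hq
  exact absurd hq.symm j.isLt.ne

lemma child_toFinQ_label (h : u.parent = v) : hc.child v (toFinQ (c v u)) = u := by
  have hlt := hc.label_lt_of_parent_eq h
  obtain ⟨z, -, hz⟩ := hc.1 v (c v u)
  refine (hz _ ⟨Or.inl (hc.parent_child v _), ?_⟩).trans (hz u ⟨Or.inl h, rfl⟩).symm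
  rw [hc.label_child]
  exact Fin.ext (by simp [toFinQ, hlt])

/-- The inverse of `φ^c_v = phiStr c v`. -/
noncomputable def descend : Vertex q → List (Fin q) → Vertex q
  | v, [] => v
  | v, j :: l => descend (hc.child v j) l

lemma descendant_descend (v : Vertex q) (l : List (Fin q)) : Descendant v (hc.descend v l) := by
  induction l generalizing v with
  | nil => exact Descendant.refl v
  | cons j l ih => exact (descendant_of_parent_eq (hc.parent_child v j)).trans (ih _)

lemma descend_append (v : Vertex q) (l₁ l₂ : List (Fin q)) :
    hc.descend v (l₁ ++ l₂) = hc.descend (hc.descend v l₁) l₂ := by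
  induction l₁ generalizing v with
  | nil => rfl
  | cons j l ih => exact ih _

lemma phiStr_descend (v : Vertex q) (l : List (Fin q)) : phiStr c v (hc.descend v l) = l := by
  induction l generalizing v with
  | nil => exact phiStr_self c v
  | cons j l ih =>
    have hchild := hc.parent_child v j
    rw [descend, phiStr_append (descendant_of_parent_eq hchild) (hc.descendant_descend _ l),
      phiStr_of_parent_eq hchild, ih, hc.label_child, toFinQ_castLE, List.singleton_append]

lemma descend_phiStr (h : Descendant v w) : hc.descend v (phiStr c v w) = w := by
  obtain ⟨d, hd⟩ : ∃ d, (w.level - v.level).toNat = d := ⟨_, rfl⟩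
  induction d generalizing v with
  | zero =>
    rw [h.eq_of_level_eq (by have := h.1; omega), phiStr_self]
    rfl
  | succ d ih =>
    set u := parent^[d] w
    have hu : u.parent = v := by
      have hv := h.iterate_parent_eq
      rwa [hd, Function.iterate_succ_apply'] at hv
    have huw : Descendant u w := descendant_iterate_parent d w
    rw [phiStr_append (descendant_of_parent_eq hu) huw, phiStr_of_parent_eq hu,
      List.singleton_append, descend, hc.child_toFinQ_label hu]
    exact ih huw (by rw [level_iterate_parent]; omega)

end IsEdgeLabelling

end EdgeLabelling

section Sections

variable {q : ℕ} [NeZero q] {c : Vertex q → Vertex q → Fin (q + 1)} (hc : IsEdgeLabelling c)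
  {x y : Equiv.Perm (Vertex q)} {v w : Vertex q}

/-- The section `φ^c_{x(v)} ∘ x ∘ (φ^c_v)⁻¹` of `x` at `v`. -/
noncomputable def sectAt (hx : x ∈ IsomOmega q) (v : Vertex q) : Equiv.Perm (List (Fin q)) where
  toFun l := phiStr c (x v) (x (hc.descend v l))
  invFun l := phiStr c v (x⁻¹ (hc.descend (x v) l))
  left_inv l := by
    dsimp only
    rw [hc.descend_phiStr ((hc.descendant_descend v l).map hx), Equiv.Perm.coe_inv,
      Equiv.symm_apply_apply, hc.phiStr_descend]
  right_inv l := by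
    have h := (hc.descendant_descend (x v) l).map (inv_mem hx)
    rw [Equiv.Perm.coe_inv, Equiv.symm_apply_apply] at h
    dsimp only
    rw [Equiv.Perm.coe_inv, hc.descend_phiStr h, Equiv.apply_symm_apply, hc.phiStr_descend]

lemma sectAt_apply (hx : x ∈ IsomOmega q) (l : List (Fin q)) :
    sectAt hc hx v l = phiStr c (x v) (x (hc.descend v l)) := rfl

lemma sectAt_phiStr (hx : x ∈ IsomOmega q) (h : Descendant v w) :
    sectAt hc hx v (phiStr c v w) = phiStr c (x v) (x w) := by
  rw [sectAt_apply, hc.descend_phiStr h]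

lemma sectAt_append (hx : x ∈ IsomOmega q) (l s : List (Fin q)) :
    sectAt hc hx v (l ++ s) = sectAt hc hx v l ++ sectAt hc hx (hc.descend v l) s := by
  simp only [sectAt_apply, hc.descend_append]
  exact phiStr_append ((hc.descendant_descend v l).map hx)
    ((hc.descendant_descend _ s).map hx)

lemma length_sectAt (hx : x ∈ IsomOmega q) (l : List (Fin q)) :
    (sectAt hc hx v l).length = l.length := by
  have h := hc.descendant_descend v l
  rw [sectAt_apply, length_phiStr, level_sub_map_of_descendant hx h, ← length_phiStr c,
    hc.phiStr_descend]

lemma sectAt_mem_RIsom (hx : x ∈ IsomOmega q) (v : Vertex q) : sectAt hc hx v ∈ RIsom q := by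
  refine ⟨length_sectAt hc hx, ?_⟩
  rintro l _ ⟨s, rfl⟩
  rw [sectAt_append]
  exact List.prefix_append _ _

lemma sectAt_mul (hx : x ∈ IsomOmega q) (hy : y ∈ IsomOmega q) (v : Vertex q) :
    sectAt hc (mul_mem hx hy) v = sectAt hc hx (y v) * sectAt hc hy v := by
  ext1 l
  rw [Equiv.Perm.mul_apply, sectAt_apply, sectAt_apply, sectAt_apply,
    hc.descend_phiStr ((hc.descendant_descend v l).map hy)]
  rfl

lemma sectAt_eq_one (hx : x ∈ IsomOmega q) (hpres : PreservesLabelsBelow c x v) :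
    sectAt hc hx v = 1 := by
  ext1 l
  rw [sectAt_apply, phiStr_map hx hpres (hc.descendant_descend v l), hc.phiStr_descend]
  rfl

end Sections

section PermTopology

open Filter Topology

variable {X ι : Type*}

lemma tendsto_permTop_iff {l : Filter ι} {f : ι → Equiv.Perm X} {g : Equiv.Perm X} :
    Tendsto f l (@nhds _ (permTop X) g) ↔
      (∀ a, ∀ᶠ n in l, f n a = g a) ∧ ∀ a, ∀ᶠ n in l, (f n)⁻¹ a = g⁻¹ a := by
  let _ : TopologicalSpace X := ⊥
  have _ : DiscreteTopology X := ⟨rfl⟩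
  change Tendsto f l (@nhds _ (TopologicalSpace.induced (fun p : Equiv.Perm X =>
    ((p : X → X), ((p⁻¹ : Equiv.Perm X) : X → X))) inferInstance) g) ↔ _
  simp only [nhds_induced, tendsto_comap_iff, nhds_prod_eq, tendsto_prod_iff', Function.comp_def,
    tendsto_pi_nhds, nhds_discrete, tendsto_pure]

lemma setOf_forall_apply_eq_mem_nhds (g : Equiv.Perm X) {S : Set X} (hS : S.Finite) :
    {h : Equiv.Perm X | ∀ a ∈ S, h a = g a} ∈ @nhds _ (permTop X) g :=
  (eventually_all_finite hS).2 fun a _ =>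
    (tendsto_permTop_iff.1 (@tendsto_id _ (@nhds _ (permTop X) g))).1 a

lemma exists_eventually_eq_of_finite_range (U : Ultrafilter ι) {f : ι → X}
    (hf : (Set.range f).Finite) : ∃ b, ∀ᶠ n in (U : Filter ι), f n = b := by
  have hcover : (⋃ b ∈ Set.range f, f ⁻¹' {b}) ∈ U := by
    rw [← Set.preimage_iUnion₂, Set.biUnion_of_singleton, Set.preimage_range]
    exact univ_mem
  obtain ⟨b, -, hb⟩ := (Ultrafilter.finite_biUnion_mem_iff hf).1 hcover
  exact ⟨b, hb⟩

/-- Compactness of orbit-bounded sets in the permutation topology, in ultrafilter form. -/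
lemma exists_tendsto_permTop (U : Ultrafilter ι) (f : ι → Equiv.Perm X)
    (hf : ∀ a, (Set.range fun n => f n a).Finite)
    (hf' : ∀ a, (Set.range fun n => (f n)⁻¹ a).Finite) :
    ∃ g, Tendsto f U (@nhds _ (permTop X) g) := by
  choose F hF using fun a => exists_eventually_eq_of_finite_range U (hf a)
  choose G hG using fun a => exists_eventually_eq_of_finite_range U (hf' a)
  have hGF : Function.LeftInverse G F := fun a => by
    obtain ⟨n, hn, hn'⟩ := ((hF a).and (hG (F a))).exists
    rw [← hn', ← hn]
    exact (f n).symm_apply_apply a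
  have hFG : Function.RightInverse G F := fun a => by
    obtain ⟨n, hn, hn'⟩ := ((hG a).and (hF (G a))).exists
    rw [← hn', ← hn]
    exact (f n).apply_symm_apply a
  exact ⟨⟨F, G, hGF, hFG⟩, tendsto_permTop_iff.2 ⟨hF, hG⟩⟩

end PermTopology

section SectionGroup

lemma stabIn_le {q : ℕ} {P : Subgroup (Equiv.Perm (Vertex q))} (v : Vertex q) :
    stabIn P v ≤ P :=
  fun _ h => h.1

lemma apply_eq_self_of_mem_stabIn {q : ℕ} {P : Subgroup (Equiv.Perm (Vertex q))}
    {x : Equiv.Perm (Vertex q)} {v : Vertex q} (h : x ∈ stabIn P v) : x v = v :=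
  h.2

variable {q : ℕ} [NeZero q] {P : Subgroup (Equiv.Perm (Vertex q))}
  {c : Vertex q → Vertex q → Fin (q + 1)} {vp : ℤ → Vertex q} {x : Equiv.Perm (Vertex q)}

noncomputable def sectHom (hP : P ≤ IsomOmega q) (hc : IsEdgeLabelling c) (v : Vertex q) :
    stabIn P v →* Equiv.Perm (List (Fin q)) where
  toFun x := sectAt hc (hP (stabIn_le v x.2)) v
  map_one' := sectAt_eq_one hc _ fun _ _ _ _ _ => rfl
  map_mul' x y := by
    refine (sectAt_mul hc (hP (stabIn_le v x.2)) (hP (stabIn_le v y.2)) v).trans ?_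
    rw [apply_eq_self_of_mem_stabIn y.2]

lemma sectHom_apply (hP : P ≤ IsomOmega q) (hc : IsEdgeLabelling c) {v : Vertex q}
    (x : stabIn P v) : sectHom hP hc v x = sectAt hc (hP (stabIn_le v x.2)) v := rfl

/-- Composing with label-preserving elements of `P` on both sides moves both the base point
`u` and its image `x u` to `v`. -/
lemma sectAt_mem_range_sectHom (hP : P ≤ IsomOmega q) (hc : IsPLabelling P c vp)
    (hxP : x ∈ P) (u v : Vertex q) :
    sectAt hc.isEdgeLabelling (hP hxP) u ∈ (sectHom hP hc.isEdgeLabelling v).range := by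
  obtain ⟨y, hyP, hyv, hy⟩ := hc.2.2.2.2 v u
  obtain ⟨z, hzP, hzx, hz⟩ := hc.2.2.2.2 (x u) v
  have hzxy : z * x * y ∈ stabIn P v :=
    ⟨mul_mem (mul_mem hzP hxP) hyP, by simp only [Equiv.Perm.mul_apply, hyv, hzx]⟩
  refine ⟨⟨_, hzxy⟩, ?_⟩
  rw [sectHom_apply, sectAt_mul _ (mul_mem (hP hzP) (hP hxP)) (hP hyP),
    sectAt_mul _ (hP hzP) (hP hxP), hyv, sectAt_eq_one _ _ hz, sectAt_eq_one _ _ hy, one_mul,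
    mul_one]

lemma range_sectHom_le (hP : P ≤ IsomOmega q) (hc : IsPLabelling P c vp) (v v' : Vertex q) :
    (sectHom hP hc.isEdgeLabelling v).range ≤ (sectHom hP hc.isEdgeLabelling v').range := by
  rintro _ ⟨x, rfl⟩
  exact sectAt_mem_range_sectHom hP hc (stabIn_le v x.2) v v'

lemma coe_range_sectHom (hP : P ≤ IsomOmega q) (hc : IsPLabelling P c vp) (v : Vertex q) :
    ((sectHom hP hc.isEdgeLabelling v).range : Set (Equiv.Perm (List (Fin q)))) =
      sectSet P c v := by
  ext g
  constructor
  · rintro ⟨x, rfl⟩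
    exact ⟨x, stabIn_le v x.2, fun w hw => sectAt_phiStr _ (hP (stabIn_le v x.2)) hw⟩
  · rintro ⟨x, hxP, hx⟩
    obtain rfl : g = sectAt hc.isEdgeLabelling (hP hxP) v := by
      ext1 l
      have hl := hx _ (hc.isEdgeLabelling.descendant_descend v l)
      rwa [hc.isEdgeLabelling.phiStr_descend] at hl
    exact sectAt_mem_range_sectHom hP hc hxP v v

lemma sectSet_eq (hP : P ≤ IsomOmega q) (hc : IsPLabelling P c vp) (v v' : Vertex q) :
    sectSet P c v = sectSet P c v' := by
  rw [← coe_range_sectHom hP hc, ← coe_range_sectHom hP hc,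
    le_antisymm (range_sectHom_le hP hc v v') (range_sectHom_le hP hc v' v)]

lemma range_sectHom_le_RIsom (hP : P ≤ IsomOmega q) (hc : IsEdgeLabelling c) (v : Vertex q) :
    (sectHom hP hc v).range ≤ RIsom q := by
  rintro _ ⟨x, rfl⟩
  exact sectAt_mem_RIsom hc (hP (stabIn_le v x.2)) v

lemma selfReplicating_range_sectHom (hP : P ≤ IsomOmega q) (hc : IsPLabelling P c vp)
    (v : Vertex q) : SelfReplicating (sectHom hP hc.isEdgeLabelling v).range := by
  set hc' := hc.isEdgeLabelling
  refine ⟨?_, fun j j' => ?_, fun w g' hg' => ?_⟩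
  · rintro w _ ⟨x, rfl⟩ hxw
    have hxP := stabIn_le v x.2
    refine ⟨sectAt hc' (hP hxP) (hc'.descend v w),
      sectAt_mem_range_sectHom hP hc hxP _ v, fun s => ?_⟩
    rw [sectHom_apply] at hxw ⊢
    rw [sectAt_append, hxw]
  · obtain ⟨y, hyP, hy, -⟩ := hc.2.2.2.2 (hc'.child v j) (hc'.child v j')
    have hyv : y v = v := by
      have h := hP hyP (hc'.child v j)
      rwa [hy, hc'.parent_child, hc'.parent_child] at h
    refine ⟨_, ⟨⟨y, hyP, hyv⟩, rfl⟩, ?_⟩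
    rw [sectHom_apply, sectAt_apply]
    change phiStr c (y v) (y (hc'.child v j)) = [j']
    rw [hyv, hy, phiStr_of_parent_eq (hc'.parent_child v j'), hc'.label_child, toFinQ_castLE]
  · set u := hc'.descend v w
    obtain ⟨x, rfl⟩ := range_sectHom_le hP hc v u hg'
    have hx := hP (stabIn_le u x.2)
    have hxv : (x : Equiv.Perm (Vertex q)) v = v :=
      apply_eq_self_of_descendant hx (hc'.descendant_descend v w)
        (apply_eq_self_of_mem_stabIn x.2)
    have hxw : sectAt hc' hx v w = w := by
      rw [sectAt_apply, hxv, apply_eq_self_of_mem_stabIn x.2, hc'.phiStr_descend]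
    refine ⟨_, ⟨⟨x, stabIn_le u x.2, hxv⟩, rfl⟩, hxw, fun s => ?_⟩
    rw [sectHom_apply, sectAt_append, hxw]
    rfl

lemma isClosed_range_sectHom (hP : P ≤ IsomOmega q)
    (hPc : IsClosed (P : Set (Equiv.Perm (Vertex q)))) (hc : IsEdgeLabelling c) (v : Vertex q) :
    IsClosed ((sectHom hP hc v).range : Set (Equiv.Perm (List (Fin q)))) := by
  refine isClosed_of_closure_subset fun g hg => ?_
  have happrox : ∀ n : ℕ, ∃ x : stabIn P v,
      ∀ l : List (Fin q), l.length ≤ n → sectHom hP hc v x l = g l := by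
    intro n
    obtain ⟨_, hgn, x, rfl⟩ := mem_closure_iff_nhds.1 hg _
      (setOf_forall_apply_eq_mem_nhds g (List.finite_length_le (Fin q) n))
    exact ⟨x, hgn⟩
  choose x hx using happrox
  have hxv n : (x n : Equiv.Perm (Vertex q)) v = v := apply_eq_self_of_mem_stabIn (x n).2
  have hxv' n : (x n : Equiv.Perm (Vertex q))⁻¹ v = v := Equiv.Perm.inv_eq_iff_eq.2 (hxv n).symm
  have hxω n : (x n : Equiv.Perm (Vertex q)) ∈ IsomOmega q := hP (stabIn_le v (x n).2)
  obtain ⟨y, hy⟩ := exists_tendsto_permTop (Filter.hyperfilter ℕ)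
    (fun n => (x n : Equiv.Perm (Vertex q))) (finite_range_apply_of_apply_eq_self hxω hxv)
    (finite_range_apply_of_apply_eq_self (fun n => inv_mem (hxω n)) hxv')
  have hyx := (tendsto_permTop_iff.1 hy).1
  have hyv : y v = v := by
    obtain ⟨n, hn⟩ := (hyx v).exists
    rw [← hn, hxv]
  have hyP : y ∈ stabIn P v :=
    ⟨hPc.mem_of_tendsto hy (Filter.Eventually.of_forall fun n => stabIn_le v (x n).2), hyv⟩
  refine ⟨⟨y, hyP⟩, Equiv.ext fun l => ?_⟩
  obtain ⟨n, hn, hln⟩ := ((hyx (hc.descend v l)).and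
    ((Filter.eventually_ge_atTop l.length).filter_mono Nat.hyperfilter_le_atTop)).exists
  rw [← hx n l hln, sectHom_apply, sectHom_apply, sectAt_apply, sectAt_apply, hyv, hxv, hn]

end SectionGroup

end Scale

open Scale in
theorem statement_10_general (q : ℕ) [NeZero q]
    (P : Subgroup (Equiv.Perm (Vertex q))) (hP : IsScaleGroup P)
    (c : Vertex q → Vertex q → Fin (q + 1)) (vp : ℤ → Vertex q)
    (hc : IsPLabelling P c vp) :
    (∀ v v' : Vertex q, sectSet P c v = sectSet P c v') ∧
    (∀ v : Vertex q, ∃ G : Subgroup (Equiv.Perm (List (Fin q))),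
      (G : Set (Equiv.Perm (List (Fin q)))) = sectSet P c v ∧
      G ≤ RIsom q ∧
      IsClosed (G : Set (Equiv.Perm (List (Fin q)))) ∧
      SelfReplicating G) :=
  ⟨sectSet_eq hP.1 hc, fun v => ⟨(sectHom hP.1 hc.isEdgeLabelling v).range,
    coe_range_sectHom hP.1 hc v, range_sectHom_le_RIsom hP.1 _ v,
    isClosed_range_sectHom hP.1 hP.2.1 _ v, selfReplicating_range_sectHom hP.1 hc v⟩⟩

open Scale in
/-- For a scale group `P` with a `P`-labelling `c`, the section sets
`P|_v` coincide for all vertices `v` and form a closed self-replicating subgroup of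
`Isom(T_{q,q})`. -/
theorem statement_10 (q : ℕ) [NeZero q] (hq : 2 ≤ q)
    (P : Subgroup (Equiv.Perm (Vertex q))) (hP : IsScaleGroup P)
    (c : Vertex q → Vertex q → Fin (q + 1)) (vp : ℤ → Vertex q)
    (hc : IsPLabelling P c vp) :
    (∀ v v' : Vertex q, sectSet P c v = sectSet P c v') ∧
    (∀ v : Vertex q, ∃ G : Subgroup (Equiv.Perm (List (Fin q))),
      (G : Set (Equiv.Perm (List (Fin q)))) = sectSet P c v ∧
      G ≤ RIsom q ∧
      IsClosed (G : Set (Equiv.Perm (List (Fin q)))) ∧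
      SelfReplicating G) :=
  statement_10_general q P hP c vp hc
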